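/- arXiv:1401.1442 — 2 statements merged into one kernel-verified Lean document; each statement's English description precedes it below -/
import Mathlib

section
/- Conditional law given the site occupation numbers (Proposition 2.2(a)): assume θ_1 > 0 (so h_m > 0 for all m). For an integer partition λ of m define ν_m(λ) = (1/h_m)·∏_{j≥1} (1/ρ_j(λ)!)·(θ_j/j)^{ρ_j(λ)}. Let η : ℤ^d → ℕ be finitely supported with Σ_x η_x = n and suppose P_{L,n}({r : η_x(r) = η_x for all x}) > 0. Then for every r ∈ Λ_n with η_x(r) = η_x for all x, the conditional probability P_{L,n}({r} | {r' : η_x(r') = η_x for all x}) equals ∏_{x∈ℤ^d} ν_{η_x}((r_{x,j})_{j≥1}), where (r_{x,j})_{j≥1} is viewed as the integer partition of η_x with r_{x,j} parts equal to j. -/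
open scoped BigOperators ENNReal NNReal
open Filter MeasureTheory

namespace Spart

/-- `exp(-t)` for an extended-real `t`, with `exp(-∞) = 0`. -/
noncomputable def expNeg (t : ℝ≥0∞) : ℝ := if t = ∞ then 0 else Real.exp (-t.toReal)

/-- Sites of the lattice `ℤ^d`. -/
abbrev Site (d : ℕ) := Fin d → ℤ

/-- A spatial partition: a finitely supported family `(r_{x,j})` of natural numbers.
(Only indices `j ≥ 1` are meaningful; configurations are supported on `j ≥ 1`.) -/
abbrev Config (d : ℕ) := (Site d × ℕ) →₀ ℕ

/-- The rescaled site `x/L ∈ ℝ^d`. -/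
noncomputable def scaledSite {d : ℕ} (x : Site d) (L : ℝ) : Fin d → ℝ :=
  fun i => (x i : ℝ) / L

/-- Site occupation number `η_x(r) = Σ_j j r_{x,j}`. -/
noncomputable def siteOcc {d : ℕ} (r : Config d) (x : Site d) : ℕ :=
  ∑ p ∈ r.support, if p.1 = x then p.2 * r p else 0

/-- Component counts `r_j(r) = Σ_x r_{x,j}`. -/
noncomputable def compCount {d : ℕ} (r : Config d) (j : ℕ) : ℕ :=
  ∑ p ∈ r.support, if p.2 = j then r p else 0

/-- Total mass `Σ_{x,j} j r_{x,j}`. -/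
noncomputable def mass {d : ℕ} (r : Config d) : ℕ :=
  ∑ p ∈ r.support, p.2 * r p

/-- The (unnormalized) weight of a spatial partition. -/
noncomputable def W {d : ℕ} (V : (Fin d → ℝ) → ℝ≥0∞) (θ : ℕ → ℝ) (L : ℝ) (r : Config d) : ℝ :=
  ∏ p ∈ r.support,
    (1 / (Nat.factorial (r p)) : ℝ) *
      ((θ p.2 / (p.2 : ℝ)) * expNeg ((p.2 : ℝ≥0∞) * V (scaledSite p.1 L))) ^ (r p)

/-- The canonical partition function `Z_{L,n}`. -/
noncomputable def Z {d : ℕ} (V : (Fin d → ℝ) → ℝ≥0∞) (θ : ℕ → ℝ) (L : ℝ) (n : ℕ) : ℝ :=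
  ∑' r : {r : Config d // mass r = n}, W V θ L (r : Config d)

/-- The probability of an event under the canonical measure `P_{L,n}`. -/
noncomputable def P {d : ℕ} (V : (Fin d → ℝ) → ℝ≥0∞) (θ : ℕ → ℝ) (L : ℝ) (n : ℕ)
    (E : Set (Config d)) : ℝ :=
  (∑' r : {r : Config d // mass r = n ∧ r ∈ E}, W V θ L (r : Config d)) / Z V θ L n

/-- Expectation of an observable under the canonical measure `P_{L,n}`. -/
noncomputable def Ex {d : ℕ} (V : (Fin d → ℝ) → ℝ≥0∞) (θ : ℕ → ℝ) (L : ℝ) (n : ℕ)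
    (f : Config d → ℝ) : ℝ :=
  (∑' r : {r : Config d // mass r = n}, f (r : Config d) * W V θ L (r : Config d)) / Z V θ L n

/-- Single-site normalization `h_m = Σ_{λ ⊢ m} ∏_j (1/ρ_j(λ)!) (θ_j/j)^{ρ_j(λ)}`. -/
noncomputable def hcoef (θ : ℕ → ℝ) (m : ℕ) : ℝ :=
  ∑ lam : Nat.Partition m, ∏ j ∈ lam.parts.toFinset,
    (1 / (Nat.factorial (Multiset.count j lam.parts)) : ℝ) *
      (θ j / (j : ℝ)) ^ (Multiset.count j lam.parts)

end Spart

/-!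
The weight factorizes over sites:
`W r = ∏_x e^{-η_x(r) V(x/L)} · ∏_x ∏_j (1/r_{x,j}!) (θ_j/j)^{r_{x,j}}`.
On the event `{η(r) = η}` the first product is a constant `C`, and the configurations of nonzero
weight in it are exactly those obtained by choosing an integer partition of `η_x` at each site `x`.
Summing the second product over these choices gives `∏_x h_{η_x}`, so the event has weight
`C ∏_x h_{η_x}`, and in the conditional probability both `C` and `Z_{L,n}` cancel.
-/

namespace Finsupp

variable {α β M N : Type*} [Zero M] [CommMonoid N]

theorem prod_uncurry_index (f : α →₀ β →₀ M) (g : α → β → M → N) :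
    (f.uncurry.prod fun p m => g p.1 p.2 m) = f.prod fun a c => c.prod (g a) := by
  simp only [Finsupp.prod, Finsupp.uncurry, Finset.prod_disjiUnion, Finset.prod_map]
  rfl

theorem prod_curry_index (f : α × β →₀ M) (g : α → β → M → N) :
    (f.curry.prod fun a c => c.prod (g a)) = f.prod fun p m => g p.1 p.2 m := by
  rw [← prod_uncurry_index, uncurry_curry]

theorem prod_pow_pow_eq_pow_sum (c : ℕ →₀ ℕ) (a : N) :
    (c.prod fun j k => (a ^ j) ^ k) = a ^ c.sum fun j k => j * k := by
  simp only [Finsupp.prod, Finsupp.sum, ← pow_mul, Finset.prod_pow_eq_pow_sum]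

end Finsupp

theorem Multiset.sum_toFinsupp_mul (s : Multiset ℕ) :
    (Multiset.toFinsupp s).sum (fun j k => j * k) = s.sum := by
  conv_rhs => rw [← Multiset.toFinsupp_toMultiset s, Finsupp.sum_toMultiset]
  exact Finsupp.sum_congr fun j _ => mul_comm _ _

namespace Spart

lemma expNeg_natCast_mul (k : ℕ) (t : ℝ≥0∞) : expNeg (k * t) = expNeg t ^ k := by
  rcases eq_or_ne t ∞ with rfl | ht
  · rcases eq_or_ne k 0 with rfl | hk
    · simp [expNeg]
    · simp [expNeg, hk]
  · simp [expNeg, ENNReal.mul_ne_top, ht, ← Real.exp_nat_mul]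

noncomputable def blockWeight (θ : ℕ → ℝ) (j k : ℕ) : ℝ :=
  (1 / (Nat.factorial k) : ℝ) * (θ j / (j : ℝ)) ^ k

@[simp] lemma blockWeight_zero (θ : ℕ → ℝ) (j : ℕ) : blockWeight θ j 0 = 1 := by
  simp [blockWeight]

lemma hcoef_eq_sum (θ : ℕ → ℝ) (m : ℕ) :
    hcoef θ m = ∑ lam : Nat.Partition m, (Multiset.toFinsupp lam.parts).prod (blockWeight θ) :=
  rfl

section Occupation
variable {d : ℕ}

lemma siteOcc_eq_sum_curry (r : Config d) (x : Site d) :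
    siteOcc r x = (r.curry x).sum fun j k => j * k := by
  change (r.sum fun p k => if p.1 = x then p.2 * k else 0) = _
  rw [← Finsupp.sum_curry_index r fun a j k => if a = x then j * k else 0,
    Finsupp.sum_eq_single x (fun a _ hax => by simp [hax]) (fun _ => by simp)]
  simp

lemma mass_eq_sum_siteOcc (r : Config d) {X : Finset (Site d)} (hX : r.curry.support ⊆ X) :
    mass r = ∑ x ∈ X, siteOcc r x := by
  change (r.sum fun p k => p.2 * k) = _
  rw [← Finsupp.sum_curry_index r fun _ j k => j * k,
    Finsupp.sum_of_support_subset _ hX _ (fun _ _ => Finsupp.sum_zero_index)]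
  simp only [siteOcc_eq_sum_curry]

lemma mul_le_siteOcc (r : Config d) (x : Site d) (j : ℕ) : j * r (x, j) ≤ siteOcc r x := by
  rw [siteOcc_eq_sum_curry]
  by_cases h : r (x, j) = 0
  · simp [h]
  exact Finset.single_le_sum (f := fun j => j * r.curry x j) (by simp) (by simpa using h)

lemma support_curry_subset_of_siteOcc {r : Config d} {η : Site d →₀ ℕ}
    (hocc : ∀ x, siteOcc r x = η x) (h0 : ∀ x, r (x, 0) = 0) :
    r.curry.support ⊆ η.support := by
  intro x hx
  obtain ⟨j, hj⟩ : ∃ j, r (x, j) ≠ 0 := by simpa [Finsupp.ext_iff] using hx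
  have hj0 : j ≠ 0 := by rintro rfl; exact hj (h0 x)
  rw [Finsupp.mem_support_iff, ← hocc]
  exact ((Nat.pos_of_ne_zero (Nat.mul_ne_zero hj0 hj)).trans_le (mul_le_siteOcc r x j)).ne'

end Occupation

section Weight
variable {d : ℕ} (V : (Fin d → ℝ) → ℝ≥0∞) (θ : ℕ → ℝ) (L : ℝ)

lemma W_eq_prod_curry (r : Config d) {X : Finset (Site d)} (hX : r.curry.support ⊆ X) :
    W V θ L r = ∏ x ∈ X,
      expNeg (V (scaledSite x L)) ^ siteOcc r x * (r.curry x).prod (blockWeight θ) := by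
  have hW : W V θ L r = r.prod fun p k =>
      (expNeg (V (scaledSite p.1 L)) ^ p.2) ^ k * blockWeight θ p.2 k :=
    Finset.prod_congr rfl fun p _ => by
      simp only [expNeg_natCast_mul, mul_pow, blockWeight]
      ring
  rw [hW, ← Finsupp.prod_curry_index r fun x j k =>
      (expNeg (V (scaledSite x L)) ^ j) ^ k * blockWeight θ j k,
    Finsupp.prod_of_support_subset _ hX _ (fun _ _ => Finsupp.prod_zero_index)]
  refine Finset.prod_congr rfl fun x _ => ?_
  rw [Finsupp.prod_mul, Finsupp.prod_pow_pow_eq_pow_sum, siteOcc_eq_sum_curry]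

/-- Since `θ 0 / 0 = 0`, a block of size `0` annihilates the weight. -/
lemma W_eq_zero_of_apply_mk_zero_ne_zero {r : Config d} {x : Site d} (h : r (x, 0) ≠ 0) :
    W V θ L r = 0 :=
  Finset.prod_eq_zero (Finsupp.mem_support_iff.mpr h) (by simp [zero_pow h])

lemma W_eq_of_siteOcc {η : Site d →₀ ℕ} {r : Config d} (hocc : ∀ x, siteOcc r x = η x)
    (h0 : ∀ x, r (x, 0) = 0) :
    W V θ L r = (∏ x ∈ η.support, expNeg (V (scaledSite x L)) ^ η x) *
      ∏ x ∈ η.support, ∏ j ∈ r.support.image Prod.snd, blockWeight θ j (r (x, j)) := by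
  rw [W_eq_prod_curry V θ L r (support_curry_subset_of_siteOcc hocc h0),
    Finset.prod_mul_distrib]
  congr 1
  · simp only [hocc]
  · refine Finset.prod_congr rfl fun x _ => Finsupp.prod_of_support_subset _ ?_ _ (by simp)
    intro j hj
    exact Finset.mem_image_of_mem Prod.snd (Finsupp.mem_support_iff.mpr (by simpa using hj))

end Weight

section OfPartitions
variable {d : ℕ}

/-- The configuration with `r_{x,j}` equal to the multiplicity of `j` in the partition `f x`. -/
noncomputable def ofPartitions (η : Site d →₀ ℕ)
    (f : ∀ x : η.support, Nat.Partition (η x)) : Config d :=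
  Finsupp.uncurry <| Finsupp.onFinset η.support
    (fun x => if h : x ∈ η.support then Multiset.toFinsupp (f ⟨x, h⟩).parts else 0)
    (fun x hx => by by_contra h; exact hx (dif_neg h))

variable (η : Site d →₀ ℕ) (f : ∀ x : η.support, Nat.Partition (η x))

lemma curry_ofPartitions (x : Site d) :
    (ofPartitions η f).curry x
      = if h : x ∈ η.support then Multiset.toFinsupp (f ⟨x, h⟩).parts else 0 := by
  simp [ofPartitions]

lemma support_curry_ofPartitions : (ofPartitions η f).curry.support ⊆ η.support := by
  intro x hx
  by_contra h
  rw [Finsupp.mem_support_iff, curry_ofPartitions, dif_neg h] at hx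
  exact hx rfl

lemma siteOcc_ofPartitions (x : Site d) : siteOcc (ofPartitions η f) x = η x := by
  rw [siteOcc_eq_sum_curry, curry_ofPartitions]
  split_ifs with hx
  · rw [Multiset.sum_toFinsupp_mul, (f _).parts_sum]
  · exact (Finsupp.notMem_support_iff.mp hx).symm

lemma mass_ofPartitions : mass (ofPartitions η f) = ∑ x ∈ η.support, η x := by
  rw [mass_eq_sum_siteOcc _ (support_curry_ofPartitions η f)]
  simp only [siteOcc_ofPartitions]

lemma ofPartitions_injective : Function.Injective (ofPartitions η) := by
  intro f g hfg
  funext x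
  have hx := congrArg (fun r : Config d => r.curry x) hfg
  simp only [curry_ofPartitions, dif_pos x.2] at hx
  exact Nat.Partition.ext (Multiset.toFinsupp.injective hx)

lemma W_ofPartitions (V : (Fin d → ℝ) → ℝ≥0∞) (θ : ℕ → ℝ) (L : ℝ) :
    W V θ L (ofPartitions η f)
      = (∏ x ∈ η.support, expNeg (V (scaledSite x L)) ^ η x) *
          ∏ x : η.support, (Multiset.toFinsupp (f x).parts).prod (blockWeight θ) := by
  rw [W_eq_prod_curry V θ L _ (support_curry_ofPartitions η f), Finset.prod_mul_distrib,
    ← Finset.prod_attach η.support fun x => ((ofPartitions η f).curry x).prod _]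
  simp [siteOcc_ofPartitions, curry_ofPartitions]

lemma exists_ofPartitions_eq {η : Site d →₀ ℕ} {r : Config d}
    (hocc : ∀ x, siteOcc r x = η x) (h0 : ∀ x, r (x, 0) = 0) :
    ∃ f, ofPartitions η f = r := by
  refine ⟨fun x => Nat.Partition.ofSums (η x) (r.curry x).toMultiset ?_, ?_⟩
  · rw [Finsupp.sum_toMultiset, ← hocc, siteOcc_eq_sum_curry]
    simp [mul_comm]
  ext ⟨y, j⟩
  rw [← Finsupp.curry_apply, curry_ofPartitions]
  split_ifs with hy
  · rcases eq_or_ne j 0 with rfl | hj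
    · rw [Multiset.toFinsupp_apply, Nat.Partition.count_ofSums_zero, h0]
    · rw [Multiset.toFinsupp_apply, Nat.Partition.count_ofSums_of_ne_zero _ hj,
        Finsupp.count_toMultiset, Finsupp.curry_apply]
  · have hry : r.curry y = 0 :=
      Finsupp.notMem_support_iff.mp fun h => hy (support_curry_subset_of_siteOcc hocc h0 h)
    rw [← Finsupp.curry_apply, hry, Finsupp.coe_zero, Pi.zero_apply]

end OfPartitions

section Probability
variable {d : ℕ} (V : (Fin d → ℝ) → ℝ≥0∞) (θ : ℕ → ℝ) (L : ℝ)

lemma tsum_W_siteOcc_eq_prod_hcoef (η : Site d →₀ ℕ) {n : ℕ}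
    (hη : ∑ x ∈ η.support, η x = n) :
    ∑' r : {r : Config d // mass r = n ∧ r ∈ {r' | ∀ x, siteOcc r' x = η x}}, W V θ L r
      = (∏ x ∈ η.support, expNeg (V (scaledSite x L)) ^ η x) *
          ∏ x ∈ η.support, hcoef θ (η x) := by
  let g : (∀ x : η.support, Nat.Partition (η x)) →
      {r : Config d // mass r = n ∧ r ∈ {r' | ∀ x, siteOcc r' x = η x}} :=
    fun f => ⟨ofPartitions η f, by rw [mass_ofPartitions, hη], siteOcc_ofPartitions η f⟩
  have hg : Function.Injective g := fun f f' h => ofPartitions_injective η (congrArg Subtype.val h)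
  rw [← hg.tsum_eq (f := fun r => W V θ L r), tsum_fintype]
  · simp only [g, W_ofPartitions, ← Finset.mul_sum, hcoef_eq_sum]
    congr 1
    rw [← Finset.prod_coe_sort η.support]
    exact (Fintype.prod_sum fun (x : η.support) (lam : Nat.Partition (η x)) =>
      (Multiset.toFinsupp lam.parts).prod (blockWeight θ)).symm
  · intro r hr
    by_cases h0 : ∀ x, r.1 (x, 0) = 0
    · obtain ⟨f, hf⟩ := exists_ofPartitions_eq r.2.2 h0
      exact ⟨f, Subtype.ext hf⟩
    · obtain ⟨x, hx⟩ := not_forall.mp h0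
      exact absurd (W_eq_zero_of_apply_mk_zero_ne_zero V θ L hx) hr

lemma P_singleton {n : ℕ} {r : Config d} (hmass : mass r = n) :
    P V θ L n {r} = W V θ L r / Z V θ L n := by
  rw [P, tsum_eq_single ⟨r, hmass, rfl⟩ fun b hb => absurd (Subtype.ext b.2.2) hb]

end Probability

theorem statement2_general (d : ℕ)
    (V : (Fin d → ℝ) → ℝ≥0∞) (θ : ℕ → ℝ) (L : ℝ) (n : ℕ)
    (η : Site d →₀ ℕ) (hη : ∑ x ∈ η.support, η x = n)
    (hEpos : 0 < P V θ L n {r' | ∀ x : Site d, siteOcc r' x = η x})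
    (r : Config d) (hmass : mass r = n) (hr0 : ∀ x : Site d, r (x, 0) = 0)
    (hrη : ∀ x : Site d, siteOcc r x = η x) :
    P V θ L n {r} / P V θ L n {r' | ∀ x : Site d, siteOcc r' x = η x}
      = ∏ x ∈ η.support, ((1 / hcoef θ (η x)) *
          ∏ j ∈ r.support.image Prod.snd,
            (1 / (Nat.factorial (r (x, j))) : ℝ) * (θ j / (j : ℝ)) ^ (r (x, j))) := by
  have hPE : P V θ L n {r' | ∀ x : Site d, siteOcc r' x = η x}
      = (∏ x ∈ η.support, expNeg (V (scaledSite x L)) ^ η x) *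
          (∏ x ∈ η.support, hcoef θ (η x)) / Z V θ L n := by
    rw [P, tsum_W_siteOcc_eq_prod_hcoef V θ L η hη]
  rw [hPE] at hEpos ⊢
  obtain ⟨hCH, hZ⟩ := div_ne_zero_iff.mp hEpos.ne'
  obtain ⟨hC, hH⟩ := mul_ne_zero_iff.mp hCH
  rw [P_singleton V θ L hmass, W_eq_of_siteOcc V θ L hrη hr0, Finset.prod_mul_distrib,
    Finset.prod_div_distrib, Finset.prod_const_one]
  unfold blockWeight
  field_simp

/-- Proposition 2.2(a): conditional law given the site occupation numbers. -/
theorem statement2 (d : ℕ) (hd : 1 ≤ d)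
    (V : (Fin d → ℝ) → ℝ≥0∞) (θ : ℕ → ℝ) (L : ℝ) (n : ℕ)
    (hL : 0 < L) (hθ : ∀ j, 1 ≤ j → 0 ≤ θ j) (hθ1 : 0 < θ 1)
    (hZsum : Summable (fun r : {r : Config d // mass r = n} => W V θ L (r : Config d)))
    (hZpos : 0 < Z V θ L n)
    (η : Site d →₀ ℕ) (hη : ∑ x ∈ η.support, η x = n)
    (hEpos : 0 < P V θ L n {r' | ∀ x : Site d, siteOcc r' x = η x})
    (r : Config d) (hmass : mass r = n) (hr0 : ∀ x : Site d, r (x, 0) = 0)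
    (hrη : ∀ x : Site d, siteOcc r x = η x) :
    P V θ L n {r} / P V θ L n {r' | ∀ x : Site d, siteOcc r' x = η x}
      = ∏ x ∈ η.support, ((1 / hcoef θ (η x)) *
          ∏ j ∈ r.support.image Prod.snd,
            (1 / (Nat.factorial (r (x, j))) : ℝ) * (θ j / (j : ℝ)) ^ (r (x, j))) :=
  statement2_general d V θ L n η hη hEpos r hmass hr0 hrη

end Spart
end

section
/- Asymptotics of the single-site normalization for subexponential weights (Theorem 2.5): let θ_j > 0 for all j with θ_{n+1}/θ_n → 1 as n → ∞, and suppose there are constants c_j such that θ_{n−j}/θ_n ≤ c_j for all n and all integers 1 ≤ j ≤ n/2, with Σ_{j≥1} θ_j·c_j/j < ∞. Then Σ_{j≥1} θ_j/j < ∞ and n·h_n/θ_n → exp(Σ_{j≥1} θ_j/j) as n → ∞. -/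
open scoped BigOperators ENNReal NNReal
open Filter MeasureTheory

/-!
Write `g_j = θ_j / j`. The weights `h_n` are the coefficients of
`exp (∑_j g_j x^j) = ∏_j ∑_k g_j^k x^(j k) / k!`: comparing partitions with their vectors of
multiplicities gives `∑_n h_n = exp (∑_j g_j)`, and removing one part equal to `j` gives the
recursion `n h_n = ∑_{j=1}^n θ_j h_{n-j}`, that is `n h_n / θ_n = ∑_{k<n} (θ_{n-k} / θ_n) h_k`.

Letting `n → ∞` in `θ_{n-k} / θ_n ≤ c_k` shows `c_k ≥ 1`. A strong induction gives
`n h_n ≤ B θ_n`: in the terms with `2k ≤ n`, all but finitely many `k` lie in a tail of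
`∑ θ_k c_k / k` of size at most `1/4`, and the terms with `2k > n` add up to at most
`(2B/n) ∑_{j ≤ n} θ_j c_j`, which is small by Kronecker's lemma. Given this bound, the terms with
`2k ≤ n` are dominated by the summable `c_k h_k` and converge to `∑_k h_k`, while the terms with
`2k > n` tend to `0`.
-/

namespace Spart

open Finset Topology

section Weights

variable (θ : ℕ → ℝ)

noncomputable def partWeight (j k : ℕ) : ℝ :=
  (1 / (Nat.factorial k) : ℝ) * (θ j / (j : ℝ)) ^ k

noncomputable def multisetWeight (m : Multiset ℕ) : ℝ :=
  ∏ j ∈ m.toFinset, partWeight θ j (m.count j)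

theorem hcoef_eq_sum_multisetWeight (n : ℕ) :
    hcoef θ n = ∑ p : n.Partition, multisetWeight θ p.parts := rfl

theorem partWeight_zero (j : ℕ) : partWeight θ j 0 = 1 := by simp [partWeight]

theorem succ_mul_partWeight_succ (j k : ℕ) :
    (k + 1 : ℝ) * partWeight θ j (k + 1) = θ j / j * partWeight θ j k := by
  simp only [partWeight, Nat.factorial_succ, Nat.cast_mul, pow_succ]
  field_simp
  push_cast
  ring

theorem hasSum_partWeight (j : ℕ) : HasSum (partWeight θ j) (Real.exp (θ j / j)) := by
  have h : partWeight θ j = fun k => (θ j / j) ^ k / (Nat.factorial k) :=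
    funext fun k => by rw [partWeight, one_div, inv_mul_eq_div]
  rw [h, Real.exp_eq_exp_ℝ]
  exact NormedSpace.expSeries_div_hasSum_exp _

theorem multisetWeight_eq_prod_of_subset {m : Multiset ℕ} {s : Finset ℕ}
    (hs : m.toFinset ⊆ s) : multisetWeight θ m = ∏ j ∈ s, partWeight θ j (m.count j) :=
  prod_subset hs fun j _ hj => by
    rw [Multiset.count_eq_zero_of_notMem (by simpa using hj), partWeight_zero]

theorem multisetWeight_cons (j : ℕ) (m : Multiset ℕ) :
    (m.count j + 1 : ℝ) * multisetWeight θ (j ::ₘ m) = θ j / j * multisetWeight θ m := by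
  classical
  set s := insert j m.toFinset
  have hcons : (j ::ₘ m).toFinset ⊆ s := by simp [s]
  rw [multisetWeight_eq_prod_of_subset θ hcons,
    multisetWeight_eq_prod_of_subset θ (subset_insert j m.toFinset),
    ← mul_prod_erase s _ (mem_insert_self j _), ← mul_prod_erase s _ (mem_insert_self j _),
    Multiset.count_cons_self, ← mul_assoc, succ_mul_partWeight_succ, mul_assoc]
  congr 2
  exact prod_congr rfl fun i hi => by rw [Multiset.count_cons_of_ne (ne_of_mem_erase hi)]

variable {θ}

theorem div_natCast_nonneg (hθ : ∀ j, 1 ≤ j → 0 ≤ θ j) (j : ℕ) : 0 ≤ θ j / j := by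
  rcases Nat.eq_zero_or_pos j with rfl | hj
  · simp
  · exact div_nonneg (hθ j hj) j.cast_nonneg

theorem partWeight_nonneg (hθ : ∀ j, 1 ≤ j → 0 ≤ θ j) (j k : ℕ) : 0 ≤ partWeight θ j k := by
  have := div_natCast_nonneg hθ j
  unfold partWeight
  positivity

theorem multisetWeight_nonneg (hθ : ∀ j, 1 ≤ j → 0 ≤ θ j) (m : Multiset ℕ) :
    0 ≤ multisetWeight θ m :=
  prod_nonneg fun j _ => partWeight_nonneg hθ j _

theorem hcoef_nonneg (hθ : ∀ j, 1 ≤ j → 0 ≤ θ j) (n : ℕ) : 0 ≤ hcoef θ n :=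
  sum_nonneg fun p _ => multisetWeight_nonneg hθ p.parts

end Weights

section Recursion

variable (θ : ℕ → ℝ)

theorem sum_count_mul_multisetWeight {j n : ℕ} (hj : 1 ≤ j) (hjn : j ≤ n) :
    ∑ p : n.Partition, (p.parts.count j * j : ℝ) * multisetWeight θ p.parts =
      θ j * hcoef θ (n - j) := by
  rw [← Fintype.sum_subtype_add_sum_subtype (fun p : n.Partition => j ∈ p.parts),
    Fintype.sum_eq_zero (fun p : {p : n.Partition // j ∉ p.parts} => _)
      fun p => by simp [Multiset.count_eq_zero_of_notMem p.2],
    add_zero, ← (Nat.Partition.partitionWithPartEquiv hj hjn).symm.sum_comp,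
    hcoef_eq_sum_multisetWeight, mul_sum]
  refine sum_congr rfl fun μ _ => ?_
  have hj0 : (j : ℝ) ≠ 0 := by positivity
  rw [Nat.Partition.partitionWithPartEquiv_symm_apply_parts, Multiset.count_cons_self]
  push_cast
  rw [mul_right_comm, multisetWeight_cons]
  field_simp

theorem sum_Icc_count_mul {n : ℕ} (p : n.Partition) :
    ∑ j ∈ Icc 1 n, p.parts.count j * j = n := by
  simpa [Nat.Partition.toFinsuppAntidiag] using
    (mem_finsuppAntidiag.1 p.toFinsuppAntidiag_mem_finsuppAntidiag).1

theorem natCast_mul_hcoef (n : ℕ) :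
    (n : ℝ) * hcoef θ n = ∑ j ∈ Icc 1 n, θ j * hcoef θ (n - j) := by
  calc (n : ℝ) * hcoef θ n
      = ∑ p : n.Partition, ∑ j ∈ Icc 1 n, (p.parts.count j * j : ℝ) * multisetWeight θ p.parts := by
        rw [hcoef_eq_sum_multisetWeight, mul_sum]
        refine sum_congr rfl fun p _ => ?_
        rw [← sum_mul]
        exact_mod_cast congrArg (fun m : ℕ => (m : ℝ) * multisetWeight θ p.parts)
          (sum_Icc_count_mul p).symm
    _ = ∑ j ∈ Icc 1 n, θ j * hcoef θ (n - j) := by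
        rw [sum_comm]
        exact sum_congr rfl fun j hj =>
          sum_count_mul_multisetWeight θ (mem_Icc.1 hj).1 (mem_Icc.1 hj).2

end Recursion

section Exponential

variable (N : ℕ)

def ofCounts (p : Fin N → ℕ) : Multiset ℕ := ∑ j : Fin N, Multiset.replicate (p j) ((j : ℕ) + 1)

theorem count_ofCounts (p : Fin N → ℕ) (j : Fin N) : (ofCounts N p).count ((j : ℕ) + 1) = p j := by
  classical
  rw [ofCounts, Multiset.count_sum', sum_eq_single j]
  · simp
  · intro i _ hij
    simp [Multiset.count_replicate, Fin.val_inj, hij]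
  · simp

theorem mem_Icc_of_mem_ofCounts {p : Fin N → ℕ} {i : ℕ} (hi : i ∈ ofCounts N p) :
    i ∈ Icc 1 N := by
  obtain ⟨j, -, hj⟩ := Multiset.mem_sum.1 hi
  rw [Multiset.eq_of_mem_replicate hj, mem_Icc]
  exact ⟨Nat.le_add_left 1 j, j.2⟩

theorem ofCounts_injective : Function.Injective (ofCounts N) := fun p q h =>
  funext fun j => by rw [← count_ofCounts N p j, h, count_ofCounts]

theorem ofCounts_count {m : Multiset ℕ} (hm : ∀ i ∈ m, i ∈ Icc 1 N) :
    ofCounts N (fun j => m.count ((j : ℕ) + 1)) = m := by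
  ext i
  by_cases hi : i ∈ Icc 1 N
  · obtain ⟨h1, h2⟩ := mem_Icc.1 hi
    simpa [Nat.sub_add_cancel h1] using
      count_ofCounts N (fun j => m.count ((j : ℕ) + 1)) ⟨i - 1, by omega⟩
  · rw [Multiset.count_eq_zero_of_notMem fun h => hi (mem_Icc_of_mem_ofCounts N h),
      Multiset.count_eq_zero_of_notMem fun h => hi (hm i h)]

theorem sum_ofCounts_le {M : ℕ} {p : Fin N → ℕ} (hp : ∀ j, p j ≤ M) :
    (ofCounts N p).sum ≤ N * M * N := by
  calc (ofCounts N p).sum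
      ≤ Multiset.card (ofCounts N p) * N :=
        Multiset.sum_le_card_nsmul _ _ fun i hi => (mem_Icc.1 (mem_Icc_of_mem_ofCounts N hi)).2
    _ = (∑ j, p j) * N := by simp [ofCounts, Multiset.card_sum]
    _ ≤ N * M * N := by
        gcongr
        simpa using sum_le_sum fun j (_ : j ∈ univ) => hp j

theorem multisetWeight_ofCounts (θ : ℕ → ℝ) (p : Fin N → ℕ) :
    multisetWeight θ (ofCounts N p) = ∏ j : Fin N, partWeight θ ((j : ℕ) + 1) (p j) := by
  classical
  have hsub : (ofCounts N p).toFinset ⊆ univ.image fun j : Fin N => (j : ℕ) + 1 := fun i hi => by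
    obtain ⟨h1, h2⟩ := mem_Icc.1 (mem_Icc_of_mem_ofCounts N (Multiset.mem_toFinset.1 hi))
    exact mem_image.2 ⟨⟨i - 1, by omega⟩, mem_univ _, Nat.sub_add_cancel h1⟩
  rw [multisetWeight_eq_prod_of_subset θ hsub,
    prod_image fun i _ j _ h => Fin.ext (Nat.add_right_cancel h)]
  exact prod_congr rfl fun j _ => by rw [count_ofCounts]

theorem prod_sum_partWeight (θ : ℕ → ℝ) (M : ℕ) :
    ∏ j : Fin N, ∑ k ∈ range M, partWeight θ ((j : ℕ) + 1) k =
      ∑ m ∈ (Fintype.piFinset fun _ : Fin N => range M).image (ofCounts N),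
        multisetWeight θ m := by
  classical
  rw [prod_univ_sum, sum_image fun p _ q _ h => ofCounts_injective N h]
  exact sum_congr rfl fun p _ => (multisetWeight_ofCounts N θ p).symm

noncomputable def partitionsBelow (K : ℕ) : Finset (Multiset ℕ) :=
  (range K).biUnion fun n => univ.image (Nat.Partition.parts (n := n))

theorem mem_partitionsBelow {K : ℕ} {m : Multiset ℕ} :
    m ∈ partitionsBelow K ↔ (∀ i ∈ m, 0 < i) ∧ m.sum < K := by
  simp only [partitionsBelow, mem_biUnion, mem_range, mem_image, mem_univ, true_and]
  constructor
  · rintro ⟨n, hn, p, rfl⟩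
    exact ⟨fun i hi => p.parts_pos hi, by rwa [p.parts_sum]⟩
  · rintro ⟨hpos, hsum⟩
    exact ⟨m.sum, hsum, ⟨m, fun hi => hpos _ hi, rfl⟩, rfl⟩

theorem sum_partitionsBelow (θ : ℕ → ℝ) (K : ℕ) :
    ∑ m ∈ partitionsBelow K, multisetWeight θ m = ∑ n ∈ range K, hcoef θ n := by
  classical
  rw [partitionsBelow, sum_biUnion]
  · exact sum_congr rfl fun n _ => by rw [sum_image fun p _ q _ h => Nat.Partition.ext h]; rfl
  · intro a _ b _ hab
    simp only [Function.onFun, disjoint_left, mem_image, mem_univ, true_and]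
    rintro _ ⟨p, rfl⟩ ⟨q, hq⟩
    exact hab (by rw [← p.parts_sum, ← q.parts_sum, hq])

theorem partitionsBelow_subset_image_ofCounts (K : ℕ) :
    partitionsBelow K ⊆ (Fintype.piFinset fun _ : Fin K => range K).image (ofCounts K) := by
  intro m hm
  obtain ⟨hpos, hsum⟩ := mem_partitionsBelow.1 hm
  have hcard : Multiset.card m ≤ m.sum := by
    simpa using Multiset.card_nsmul_le_sum (a := 1) hpos
  have hIcc : ∀ i ∈ m, i ∈ Icc 1 K := fun i hi =>
    mem_Icc.2 ⟨hpos i hi, (Multiset.le_sum_of_mem hi).trans hsum.le⟩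
  exact mem_image.2 ⟨_, Fintype.mem_piFinset.2 fun j => mem_range.2
    (((Multiset.count_le_card _ _).trans hcard).trans_lt hsum), ofCounts_count K hIcc⟩

theorem image_ofCounts_subset_partitionsBelow (M : ℕ) :
    (Fintype.piFinset fun _ : Fin N => range M).image (ofCounts N) ⊆
      partitionsBelow (N * M * N + 1) := by
  intro m hm
  obtain ⟨p, hp, rfl⟩ := mem_image.1 hm
  exact mem_partitionsBelow.2 ⟨fun i hi => (mem_Icc.1 (mem_Icc_of_mem_ofCounts N hi)).1,
    Nat.lt_succ_of_le (sum_ofCounts_le N fun j =>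
      (mem_range.1 (Fintype.mem_piFinset.1 hp j)).le)⟩

theorem prod_exp_eq_exp_sum_range (θ : ℕ → ℝ) :
    ∏ j : Fin N, Real.exp (θ (j + 1) / ((j + 1 : ℕ) : ℝ)) =
      Real.exp (∑ j ∈ range (N + 1), θ j / j) := by
  rw [Fin.prod_univ_eq_prod_range (fun j => Real.exp (θ (j + 1) / ((j + 1 : ℕ) : ℝ))),
    ← Real.exp_sum, sum_range_succ']
  simp

variable {θ : ℕ → ℝ} (hθ : ∀ j, 1 ≤ j → 0 ≤ θ j)
include hθ

theorem sum_range_hcoef_le_exp :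
    ∑ n ∈ range N, hcoef θ n ≤ Real.exp (∑ j ∈ range (N + 1), θ j / j) := by
  rw [← sum_partitionsBelow, ← prod_exp_eq_exp_sum_range]
  calc ∑ m ∈ partitionsBelow N, multisetWeight θ m
      ≤ ∑ m ∈ (Fintype.piFinset fun _ : Fin N => range N).image (ofCounts N),
          multisetWeight θ m :=
        sum_le_sum_of_subset_of_nonneg (partitionsBelow_subset_image_ofCounts N)
          fun m _ _ => multisetWeight_nonneg hθ m
    _ = ∏ j : Fin N, ∑ k ∈ range N, partWeight θ ((j : ℕ) + 1) k :=
        (prod_sum_partWeight N θ N).symm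
    _ ≤ _ := prod_le_prod (fun j _ => sum_nonneg fun k _ => partWeight_nonneg hθ _ k)
        fun j _ => sum_le_hasSum _ (fun k _ => partWeight_nonneg hθ _ k) (hasSum_partWeight θ _)

theorem exp_le_tsum_hcoef (hsumm : Summable (hcoef θ)) :
    Real.exp (∑ j ∈ range (N + 1), θ j / j) ≤ ∑' n, hcoef θ n := by
  rw [← prod_exp_eq_exp_sum_range]
  refine le_of_tendsto' (tendsto_finsetProd _ fun j _ =>
    (hasSum_partWeight θ ((j : ℕ) + 1)).tendsto_sum_nat) fun M => ?_
  rw [prod_sum_partWeight]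
  calc ∑ m ∈ (Fintype.piFinset fun _ : Fin N => range M).image (ofCounts N), multisetWeight θ m
      ≤ ∑ m ∈ partitionsBelow (N * M * N + 1), multisetWeight θ m :=
        sum_le_sum_of_subset_of_nonneg (image_ofCounts_subset_partitionsBelow N M)
          fun m _ _ => multisetWeight_nonneg hθ m
    _ = ∑ n ∈ range (N * M * N + 1), hcoef θ n := sum_partitionsBelow θ _
    _ ≤ ∑' n, hcoef θ n := hsumm.sum_le_tsum _ fun n _ => hcoef_nonneg hθ n

theorem hasSum_hcoef (hg : Summable fun j => θ j / j) :
    HasSum (hcoef θ) (Real.exp (∑' j, θ j / j)) := by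
  have hpartial (N : ℕ) : ∑ n ∈ range N, hcoef θ n ≤ Real.exp (∑' j, θ j / j) :=
    (sum_range_hcoef_le_exp N hθ).trans
      (Real.exp_le_exp.2 (hg.sum_le_tsum _ fun j _ => div_natCast_nonneg hθ j))
  have hsumm : Summable (hcoef θ) := summable_of_sum_range_le (hcoef_nonneg hθ) hpartial
  refine hsumm.hasSum_iff.2
    (le_antisymm (Real.tsum_le_of_sum_range_le (hcoef_nonneg hθ) hpartial) ?_)
  have hlim : Tendsto (fun N => Real.exp (∑ j ∈ range (N + 1), θ j / j)) atTop
      (𝓝 (Real.exp (∑' j, θ j / j))) :=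
    (Real.continuous_exp.tendsto _).comp
      (hg.hasSum.tendsto_sum_nat.comp (tendsto_add_atTop_nat 1))
  exact le_of_tendsto' hlim fun N => exp_le_tsum_hcoef N hθ hsumm

end Exponential

section Ratio

variable {θ : ℕ → ℝ} (hθ : ∀ᶠ n in atTop, θ n ≠ 0)
  (hratio : Tendsto (fun n => θ (n + 1) / θ n) atTop (𝓝 1))
include hθ hratio

theorem tendsto_add_div (k : ℕ) : Tendsto (fun n => θ (n + k) / θ n) atTop (𝓝 1) := by
  induction k with
  | zero => exact tendsto_const_nhds.congr' (hθ.mono fun n hn => (div_self hn).symm)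
  | succ k ih =>
    have h := (hratio.comp (tendsto_add_atTop_nat k)).mul ih
    rw [one_mul] at h
    refine h.congr' (((tendsto_add_atTop_nat k).eventually hθ).mono fun n hn => ?_)
    rw [Function.comp_apply, div_mul_div_cancel₀ hn, add_assoc]

theorem tendsto_sub_div (k : ℕ) : Tendsto (fun n => θ (n - k) / θ n) atTop (𝓝 1) := by
  have h := ((tendsto_add_div hθ hratio k).inv₀ one_ne_zero).comp (tendsto_sub_atTop_nat k)
  rw [inv_one] at h
  refine h.congr' ((eventually_ge_atTop k).mono fun n hn => ?_)
  simp [Nat.sub_add_cancel hn]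

theorem one_le_of_forall_sub_div_le {j : ℕ} {C : ℝ} (hC : ∀ n, 2 * j ≤ n → θ (n - j) / θ n ≤ C) :
    1 ≤ C :=
  le_of_tendsto (tendsto_sub_div hθ hratio j) (eventually_atTop.2 ⟨2 * j, hC⟩)

end Ratio

/- Kronecker's lemma, by dominated convergence: `|a_j / n| ≤ |a_j / j|` for `j ≤ n`. -/
theorem tendsto_sum_Icc_div_of_summable {a : ℕ → ℝ} (ha : Summable fun j => a j / j) :
    Tendsto (fun n : ℕ => (∑ j ∈ Icc 1 n, a j) / n) atTop (𝓝 0) := by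
  set f : ℕ → ℕ → ℝ := fun n => ((Icc 1 n : Finset ℕ) : Set ℕ).indicator fun j => a j / n
  have hf (n : ℕ) : (∑ j ∈ Icc 1 n, a j) / n = ∑' j, f n j := by
    rw [sum_div, sum_eq_tsum_indicator]
  have hlim (j : ℕ) : Tendsto (f · j) atTop (𝓝 0) := by
    rcases Nat.eq_zero_or_pos j with rfl | hj
    · simp [f]
    · refine (tendsto_const_div_atTop_nhds_zero_nat (a j)).congr'
        ((eventually_ge_atTop j).mono fun n hn => ?_)
      simp [f, Set.indicator_of_mem, hn, Nat.one_le_iff_ne_zero.mpr hj.ne']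
  have hbound (n j : ℕ) : ‖f n j‖ ≤ |a j / j| := by
    by_cases hj : j ∈ Icc 1 n
    · obtain ⟨h1, h2⟩ := mem_Icc.1 hj
      simp only [f, coe_Icc, Set.indicator_of_mem (Set.mem_Icc.2 ⟨h1, h2⟩), Real.norm_eq_abs,
        abs_div, Nat.abs_cast]
      gcongr
    · rw [show f n j = 0 from Set.indicator_of_notMem (mt mem_coe.1 hj) _, norm_zero]
      positivity
  simpa [hf] using tendsto_tsum_of_dominated_convergence ha.abs hlim
    (Eventually.of_forall hbound)

section Asymptotics

theorem sum_range_sub_div_mul_hcoef (θ : ℕ → ℝ) (n : ℕ) :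
    ∑ k ∈ range n, θ (n - k) / θ n * hcoef θ k = n * hcoef θ n / θ n := by
  rw [natCast_mul_hcoef, sum_div]
  refine sum_nbij' (n - ·) (n - ·) (fun k hk => ?_) (fun j hj => ?_) (fun k hk => ?_)
    (fun j hj => ?_) (fun k hk => ?_)
  all_goals simp only [mem_range, mem_Icc] at *
  · omega
  · omega
  · omega
  · omega
  · rw [Nat.sub_sub_self hk.le, div_mul_eq_mul_div]

theorem max_one_mul_hcoef_nonneg {θ : ℕ → ℝ} (hθ : ∀ j, 1 ≤ j → 0 ≤ θ j) {c : ℕ → ℝ} (k : ℕ) :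
    0 ≤ max 1 (c k) * hcoef θ k :=
  mul_nonneg (zero_le_one.trans (le_max_left _ _)) (hcoef_nonneg hθ k)

theorem max_one_mul_hcoef_le {θ c : ℕ → ℝ} {B : ℝ} {k : ℕ} (hk : 1 ≤ k) (hck : 1 ≤ c k)
    (hbound : k * hcoef θ k ≤ B * θ k) : max 1 (c k) * hcoef θ k ≤ B * (θ k * c k / k) := by
  have hk0 : (0 : ℝ) < k := by exact_mod_cast hk
  rw [max_eq_right hck]
  calc c k * hcoef θ k ≤ c k * (B * θ k / k) := by
        refine mul_le_mul_of_nonneg_left ?_ (by linarith)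
        rwa [le_div_iff₀ hk0, mul_comm]
    _ = B * (θ k * c k / k) := by ring

variable {θ : ℕ → ℝ} (hθ : ∀ j, 1 ≤ j → 0 < θ j) {c : ℕ → ℝ}
  (hc : ∀ n j : ℕ, 1 ≤ j → 2 * j ≤ n → θ (n - j) / θ n ≤ c j)
include hθ hc

omit hc in
theorem sub_div_mul_hcoef_nonneg {n k : ℕ} (hk : k < n) : 0 ≤ θ (n - k) / θ n * hcoef θ k :=
  mul_nonneg (div_nonneg (hθ _ (by omega)).le (hθ n (by omega)).le)
    (hcoef_nonneg (fun j hj => (hθ j hj).le) k)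

theorem c_pos {j : ℕ} (hj : 1 ≤ j) : 0 < c j :=
  (div_pos (hθ _ (by omega)) (hθ _ (by omega))).trans_le (hc (2 * j) j hj le_rfl)

/- The `max` is there for `k = 0`, where the left side is `1` and `c 0` is unconstrained. -/
theorem sub_div_mul_hcoef_le {n k : ℕ} (hn : 1 ≤ n) (hk : 2 * k ≤ n) :
    θ (n - k) / θ n * hcoef θ k ≤ max 1 (c k) * hcoef θ k := by
  refine mul_le_mul_of_nonneg_right ?_ (hcoef_nonneg (fun j hj => (hθ j hj).le) k)
  rcases Nat.eq_zero_or_pos k with rfl | hk1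
  · simp [div_self (hθ n hn).ne']
  · exact (hc n k hk1 hk).trans (le_max_right _ _)

theorem sub_div_mul_hcoef_le_of_lt_two_mul {n k : ℕ} {B : ℝ} (hkn : k < n) (hnk : n < 2 * k)
    (hB : 0 ≤ B) (hbound : k * hcoef θ k ≤ B * θ k) :
    θ (n - k) / θ n * hcoef θ k ≤ 2 * B / n * (θ (n - k) * c (n - k)) := by
  have hθn := hθ n (by omega)
  have hk0 : (0 : ℝ) < k := by exact_mod_cast (by omega : 0 < k)
  have hθk : θ k ≤ c (n - k) * θ n := by
    have := hc n (n - k) (by omega) (by omega)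
    rwa [Nat.sub_sub_self hkn.le, div_le_iff₀ hθn] at this
  have hh : hcoef θ k ≤ B * θ k / k := by
    rwa [le_div_iff₀ hk0, mul_comm]
  have hnk' : (n : ℝ) ≤ 2 * k := by exact_mod_cast hnk.le
  have hθnk := hθ (n - k) (by omega)
  have hcnk := c_pos hθ hc (j := n - k) (by omega)
  calc θ (n - k) / θ n * hcoef θ k
      ≤ θ (n - k) / θ n * (B * (c (n - k) * θ n) / k) := by
        gcongr
        exact hh.trans (by gcongr)
    _ = B * (θ (n - k) * c (n - k)) / k := by field_simp
    _ ≤ 2 * B / n * (θ (n - k) * c (n - k)) := by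
      rw [div_mul_eq_mul_div, div_le_div_iff₀ hk0 (by exact_mod_cast (by omega : 0 < n))]
      nlinarith [mul_nonneg hB (mul_pos hθnk hcnk).le]

theorem sum_upper_half_le {n : ℕ} {B : ℝ} (hn : 1 ≤ n) (hB : 0 ≤ B)
    (hbound : ∀ k, 1 ≤ k → k < n → k * hcoef θ k ≤ B * θ k) :
    ∑ k ∈ (range n).filter (fun k => ¬ 2 * k ≤ n), θ (n - k) / θ n * hcoef θ k ≤
      2 * B * ((∑ j ∈ Icc 1 n, θ j * c j) / n) := by
  set U := (range n).filter (fun k => ¬ 2 * k ≤ n)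
  have hterm : ∀ k ∈ U, θ (n - k) / θ n * hcoef θ k ≤ 2 * B / n * (θ (n - k) * c (n - k)) := by
    intro k hk
    obtain ⟨hkn, hnk⟩ : k < n ∧ n < 2 * k := by simpa [U] using hk
    exact sub_div_mul_hcoef_le_of_lt_two_mul hθ hc hkn hnk hB (hbound k (by omega) hkn)
  have hinj : Set.InjOn (n - ·) U := fun k hk l hl h => by
    simp only [U, mem_coe, mem_filter, mem_range] at hk hl
    simp only at h
    omega
  calc ∑ k ∈ U, θ (n - k) / θ n * hcoef θ k
      ≤ ∑ k ∈ U, 2 * B / n * (θ (n - k) * c (n - k)) := sum_le_sum hterm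
    _ = 2 * B / n * ∑ j ∈ U.image (n - ·), θ j * c j := by rw [mul_sum, sum_image hinj]
    _ ≤ 2 * B / n * ∑ j ∈ Icc 1 n, θ j * c j := by
        refine mul_le_mul_of_nonneg_left (sum_le_sum_of_subset_of_nonneg (fun j hj => ?_)
          fun j hj _ => (mul_pos (hθ j (mem_Icc.1 hj).1) (c_pos hθ hc (mem_Icc.1 hj).1)).le)
          (by positivity)
        obtain ⟨k, hk, rfl⟩ := mem_image.1 hj
        simp only [U, mem_filter, mem_range] at hk
        exact mem_Icc.2 ⟨by omega, by omega⟩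
    _ = 2 * B * ((∑ j ∈ Icc 1 n, θ j * c j) / n) := by ring

theorem natCast_mul_hcoef_le_of_forall_lt {n : ℕ} {B : ℝ} {s : Finset ℕ} (hn : 1 ≤ n)
    (hB : 0 ≤ B) (hc1 : ∀ j, 1 ≤ j → 1 ≤ c j)
    (htail : ∀ t : Finset ℕ, Disjoint t s → ∑ k ∈ t, θ k * c k / k ≤ 1 / 4)
    (hmean : (∑ j ∈ Icc 1 n, θ j * c j) / n ≤ 1 / 8)
    (hs : 2 * ∑ k ∈ insert 0 s, max 1 (c k) * hcoef θ k ≤ B)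
    (hbound : ∀ k, 1 ≤ k → k < n → k * hcoef θ k ≤ B * θ k) :
    n * hcoef θ n ≤ B * θ n := by
  set L := (range n).filter (fun k => 2 * k ≤ n)
  set s₀ := insert 0 s
  have hlower : ∑ k ∈ L, θ (n - k) / θ n * hcoef θ k ≤
      ∑ k ∈ s₀, max 1 (c k) * hcoef θ k + B / 4 := by
    calc ∑ k ∈ L, θ (n - k) / θ n * hcoef θ k
        ≤ ∑ k ∈ L, max 1 (c k) * hcoef θ k :=
          sum_le_sum fun k hk => sub_div_mul_hcoef_le hθ hc hn (mem_filter.1 hk).2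
      _ = ∑ k ∈ L ∩ s₀, max 1 (c k) * hcoef θ k + ∑ k ∈ L \ s₀, max 1 (c k) * hcoef θ k :=
          (sum_inter_add_sum_sdiff _ _ _).symm
      _ ≤ ∑ k ∈ s₀, max 1 (c k) * hcoef θ k + B * ∑ k ∈ L \ s₀, θ k * c k / k := by
          rw [mul_sum]
          refine add_le_add (sum_le_sum_of_subset_of_nonneg inter_subset_right fun k _ _ =>
            max_one_mul_hcoef_nonneg (fun j hj => (hθ j hj).le) k)
            (sum_le_sum fun k hk => ?_)
          obtain ⟨hkL, hks⟩ := mem_sdiff.1 hk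
          have hk1 : 1 ≤ k := Nat.one_le_iff_ne_zero.2 fun h => hks (h ▸ mem_insert_self 0 s)
          have hkn : k < n := mem_range.1 (mem_filter.1 hkL).1
          exact max_one_mul_hcoef_le hk1 (hc1 k hk1) (hbound k hk1 hkn)
      _ ≤ ∑ k ∈ s₀, max 1 (c k) * hcoef θ k + B / 4 := by
          have := htail (L \ s₀)
            ((disjoint_sdiff_self_left (x := s₀) (y := L)).mono_right (subset_insert 0 s))
          nlinarith
  have hupper := sum_upper_half_le hθ hc hn hB hbound
  have hsplit := sum_filter_add_sum_filter_not (range n) (fun k => 2 * k ≤ n)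
    fun k => θ (n - k) / θ n * hcoef θ k
  rw [sum_range_sub_div_mul_hcoef] at hsplit
  rw [← div_le_iff₀ (hθ n hn), ← hsplit]
  -- the two halves contribute at most `B/2 + B/4` (`hs`, `hlower`) and `2B/8` (`hupper`, `hmean`)
  nlinarith

theorem exists_natCast_mul_hcoef_le (hc1 : ∀ j, 1 ≤ j → 1 ≤ c j)
    (hsum : Summable fun j => θ j * c j / j) :
    ∃ B, 0 ≤ B ∧ ∀ n, 1 ≤ n → n * hcoef θ n ≤ B * θ n := by
  obtain ⟨s, hs⟩ := hsum.vanishing (Iic_mem_nhds (by norm_num : (0 : ℝ) < 1 / 4))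
  obtain ⟨n₀, hn₀⟩ := eventually_atTop.1 ((tendsto_order.1
    (tendsto_sum_Icc_div_of_summable (a := fun j => θ j * c j) hsum)).2 (1 / 8) (by norm_num))
  have hsmall : ∀ m ∈ Icc 1 n₀, 0 ≤ (m : ℝ) * hcoef θ m / θ m := fun m hm =>
    div_nonneg (mul_nonneg m.cast_nonneg (hcoef_nonneg (fun j hj => (hθ j hj).le) m))
      (hθ m (mem_Icc.1 hm).1).le
  set B := max (2 * ∑ k ∈ insert 0 s, max 1 (c k) * hcoef θ k)
    (∑ m ∈ Icc 1 n₀, (m : ℝ) * hcoef θ m / θ m)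
  have hB : 0 ≤ B := le_max_of_le_right (sum_nonneg hsmall)
  refine ⟨B, hB, fun n => ?_⟩
  induction n using Nat.strong_induction_on with
  | _ n ih =>
  intro hn
  rcases le_or_gt n n₀ with hle | hlt
  · rw [← div_le_iff₀ (hθ n hn)]
    exact (single_le_sum hsmall (mem_Icc.2 ⟨hn, hle⟩)).trans (le_max_right _ _)
  · exact natCast_mul_hcoef_le_of_forall_lt hθ hc hn hB hc1 hs (hn₀ n hlt.le).le (le_max_left _ _)
      fun k hk hkn => ih k hkn hk

theorem tendsto_sum_lower_half (hratio : Tendsto (fun n => θ (n + 1) / θ n) atTop (𝓝 1))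
    (hc1 : ∀ j, 1 ≤ j → 1 ≤ c j) (hsum : Summable fun j => θ j * c j / j) {B : ℝ}
    (hbound : ∀ n, 1 ≤ n → n * hcoef θ n ≤ B * θ n) :
    Tendsto (fun n => ∑ k ∈ (range n).filter (fun k => 2 * k ≤ n), θ (n - k) / θ n * hcoef θ k)
      atTop (𝓝 (∑' k, hcoef θ k)) := by
  set L : ℕ → Finset ℕ := fun n => (range n).filter (fun k => 2 * k ≤ n)
  set f : ℕ → ℕ → ℝ := fun n =>
    ((L n : Finset ℕ) : Set ℕ).indicator fun k => θ (n - k) / θ n * hcoef θ k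
  have hθ₀ : ∀ j, 1 ≤ j → 0 ≤ θ j := fun j hj => (hθ j hj).le
  have hlim (k : ℕ) : Tendsto (f · k) atTop (𝓝 (hcoef θ k)) := by
    have hθne : ∀ᶠ n in atTop, θ n ≠ 0 := eventually_atTop.2 ⟨1, fun n hn => (hθ n hn).ne'⟩
    have h := (tendsto_sub_div hθne hratio k).mul_const (hcoef θ k)
    rw [one_mul] at h
    refine h.congr' ((eventually_ge_atTop (2 * k + 1)).mono fun n hn => ?_)
    have hk : k ∈ (range n).filter (fun k => 2 * k ≤ n) :=
      mem_filter.2 ⟨mem_range.2 (by omega), by omega⟩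
    exact (Set.indicator_of_mem (mem_coe.2 hk) (fun k => θ (n - k) / θ n * hcoef θ k)).symm
  have hdom : Summable fun k => max 1 (c k) * hcoef θ k :=
    (hsum.mul_left B).of_norm_bounded_eventually <| by
      rw [Nat.cofinite_eq_atTop]
      filter_upwards [eventually_ge_atTop 1] with k hk
      rw [Real.norm_of_nonneg (max_one_mul_hcoef_nonneg hθ₀ k)]
      exact max_one_mul_hcoef_le hk (hc1 k hk) (hbound k hk)
  have hle : ∀ᶠ n in atTop, ∀ k, ‖f n k‖ ≤ max 1 (c k) * hcoef θ k := by
    filter_upwards [eventually_ge_atTop 1] with n hn k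
    by_cases hk : k ∈ L n
    · obtain ⟨hkn, hkn'⟩ := mem_filter.1 hk
      rw [show f n k = _ from Set.indicator_of_mem (mem_coe.2 hk) _,
        Real.norm_of_nonneg (sub_div_mul_hcoef_nonneg hθ (mem_range.1 hkn))]
      exact sub_div_mul_hcoef_le hθ hc hn hkn'
    · rw [show f n k = 0 from Set.indicator_of_notMem (mt mem_coe.1 hk) _, norm_zero]
      exact max_one_mul_hcoef_nonneg hθ₀ k
  simpa only [f, ← sum_eq_tsum_indicator] using
    tendsto_tsum_of_dominated_convergence hdom hlim hle

theorem tendsto_sum_upper_half (hsum : Summable fun j => θ j * c j / j) {B : ℝ} (hB : 0 ≤ B)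
    (hbound : ∀ n, 1 ≤ n → n * hcoef θ n ≤ B * θ n) :
    Tendsto (fun n => ∑ k ∈ (range n).filter (fun k => ¬ 2 * k ≤ n), θ (n - k) / θ n * hcoef θ k)
      atTop (𝓝 0) := by
  have h := (tendsto_sum_Icc_div_of_summable (a := fun j => θ j * c j) hsum).const_mul (2 * B)
  rw [mul_zero] at h
  refine squeeze_zero' (Eventually.of_forall fun n => sum_nonneg fun k hk =>
      sub_div_mul_hcoef_nonneg hθ (mem_range.1 (mem_filter.1 hk).1))
    ((eventually_ge_atTop 1).mono fun n hn =>
      sum_upper_half_le hθ hc hn hB fun k hk _ => hbound k hk) h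

end Asymptotics

/-- Theorem 2.5: asymptotics of the single-site normalization `h_n` for
subexponential weights: `n h_n / θ_n → exp(Σ_{j≥1} θ_j/j)`. -/
theorem statement5 (θ : ℕ → ℝ) (hθ : ∀ j : ℕ, 1 ≤ j → 0 < θ j)
    (hratio : Filter.Tendsto (fun n : ℕ => θ (n + 1) / θ n) Filter.atTop (nhds 1))
    (c : ℕ → ℝ)
    (hc : ∀ n j : ℕ, 1 ≤ j → 2 * j ≤ n → θ (n - j) / θ n ≤ c j)
    (hsum : Summable (fun j : ℕ => θ j * c j / (j : ℝ))) :
    Summable (fun j : ℕ => θ j / (j : ℝ)) ∧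
    Filter.Tendsto (fun n : ℕ => (n : ℝ) * hcoef θ n / θ n) Filter.atTop
      (nhds (Real.exp (∑' j : ℕ, θ j / (j : ℝ)))) := by
  have hθne : ∀ᶠ n in atTop, θ n ≠ 0 := eventually_atTop.2 ⟨1, fun n hn => (hθ n hn).ne'⟩
  have hc1 : ∀ j, 1 ≤ j → 1 ≤ c j := fun j hj =>
    one_le_of_forall_sub_div_le hθne hratio fun n hn => hc n j hj hn
  have hg : Summable fun j : ℕ => θ j / (j : ℝ) := by
    refine hsum.of_nonneg_of_le (div_natCast_nonneg fun j hj => (hθ j hj).le) fun j => ?_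
    rcases Nat.eq_zero_or_pos j with rfl | hj
    · simp
    · exact div_le_div_of_nonneg_right (le_mul_of_one_le_right (hθ j hj).le (hc1 j hj))
        j.cast_nonneg
  obtain ⟨B, hB, hbound⟩ := exists_natCast_mul_hcoef_le hθ hc hc1 hsum
  refine ⟨hg, ?_⟩
  rw [← (hasSum_hcoef (fun j hj => (hθ j hj).le) hg).tsum_eq, ← add_zero (∑' k, hcoef θ k)]
  refine ((tendsto_sum_lower_half hθ hc hratio hc1 hsum hbound).add
    (tendsto_sum_upper_half hθ hc hsum hB hbound)).congr fun n => ?_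
  rw [sum_filter_add_sum_filter_not, sum_range_sub_div_mul_hcoef]

end Spart
end
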